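/- Let G be a k-regular simple graph on n vertices with adjacency matrix A and adjacency eigenvalues λ_1 ≥ λ_2 ≥ ⋯ ≥ λ_n (so λ_1 = k). Let t be a positive integer and let p be a real polynomial of degree at most t. Set W(p) = max_{u ∈ V(G)} (p(A))_{uu} and λ(p) = min_{2 ≤ i ≤ n} p(λ_i), and assume p(λ_1) > λ(p). Then the distance-t chromatic number satisfies χ_t(G) ≥ n / ⌊ n·(W(p) − λ(p)) / (p(λ_1) − λ(p)) ⌋. -/

import Mathlib

open Finset Polynomial

/-- The `t`-th power graph: vertices are adjacent when they are distinct and at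
graph (geodesic) distance at most `t` in `G`. -/
def powerGraph {V : Type*} (G : SimpleGraph V) (t : ℕ) : SimpleGraph V where
  Adj u v := u ≠ v ∧ G.Reachable u v ∧ G.dist u v ≤ t
  symm := ⟨by
    rintro u v ⟨h1, h2, h3⟩
    exact ⟨h1.symm, h2.symm, by rwa [SimpleGraph.dist_comm]⟩⟩
  loopless := ⟨fun v h => h.1 rfl⟩

/-- The distance-`t` chromatic number of a graph. -/
noncomputable def distChromaticNumber {V : Type*} (G : SimpleGraph V) (t : ℕ) : ℕ∞ :=
  (powerGraph G t).chromaticNumber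

/-- `x` is an eigenvalue of the (real) adjacency matrix of `G`. -/
def IsAdjEigenvalue {V : Type*} [Fintype V] [DecidableEq V] (G : SimpleGraph V)
    [DecidableRel G.Adj] (x : ℝ) : Prop :=
  ∃ v : V → ℝ, v ≠ 0 ∧ (SimpleGraph.adjMatrix ℝ G).mulVec v = x • v

/-- The hypercube graph `Q_n`. -/
def hypercube (n : ℕ) : SimpleGraph (Fin n → Fin 2) where
  Adj u v := hammingDist u v = 1
  symm := ⟨fun u v h => by simpa [hammingDist_comm] using h⟩
  loopless := ⟨fun u h => by simp [hammingDist_self] at h⟩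

noncomputable instance (n : ℕ) : DecidableRel (hypercube n).Adj :=
  fun _ _ => Classical.dec _

/-- The Lee graph `G(n,q)`: the `n`-fold Cartesian product of the `q`-cycle. -/
def leeGraph (n q : ℕ) : SimpleGraph (Fin n → ZMod q) where
  Adj u v := u ≠ v ∧ ∃ i, (u i = v i + 1 ∨ v i = u i + 1) ∧ ∀ j, j ≠ i → u j = v j
  symm := ⟨by
    rintro u v ⟨hne, i, h, hj⟩
    exact ⟨hne.symm, i, h.symm, fun j hji => (hj j hji).symm⟩⟩
  loopless := ⟨fun u h => h.1 rfl⟩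

noncomputable instance (n q : ℕ) : DecidableRel (leeGraph n q).Adj :=
  fun _ _ => Classical.dec _

/-- The Lee distance on `(ℤ/qℤ)^n`. -/
def leeDist {n q : ℕ} (b c : Fin n → ZMod q) : ℕ :=
  ∑ i, min ((b i - c i).val) (q - (b i - c i).val)

open Matrix
open scoped RealInnerProductSpace
section AuxRatioBound


lemma aux_pow_mulVec {n : ℕ} (M : Matrix (Fin n) (Fin n) ℝ) (v : Fin n → ℝ) (μ : ℝ)
    (h : M *ᵥ v = μ • v) (m : ℕ) : (M ^ m) *ᵥ v = (μ ^ m) • v := by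
  induction m with
  | zero => simp
  | succ m ih =>
    rw [pow_succ, ← mulVec_mulVec, h, mulVec_smul, ih, smul_smul, pow_succ, mul_comm]

lemma aux_aeval_mulVec {n : ℕ} (M : Matrix (Fin n) (Fin n) ℝ) (v : Fin n → ℝ) (μ : ℝ)
    (h : M *ᵥ v = μ • v) (p : Polynomial ℝ) :
    (aeval M p) *ᵥ v = (p.eval μ) • v := by
  induction p using Polynomial.induction_on' with
  | add p q hp hq => rw [map_add, add_mulVec, hp, hq, eval_add, add_smul]
  | monomial m a =>
    rw [aeval_monomial, eval_monomial, ← smul_eq_mul, algebraMap_smul,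
      smul_mulVec, aux_pow_mulVec M v μ h m, smul_smul]

lemma aux_symdot {n : ℕ} {A : Matrix (Fin n) (Fin n) ℝ} (h : Aᵀ = A) (u w : Fin n → ℝ) :
    (A *ᵥ u) ⬝ᵥ w = u ⬝ᵥ (A *ᵥ w) := by
  rw [Matrix.dotProduct_mulVec, ← Matrix.mulVec_transpose, h]

lemma aux_aeval_transpose {n : ℕ} {A : Matrix (Fin n) (Fin n) ℝ} (h : Aᵀ = A)
    (p : Polynomial ℝ) : (aeval A p)ᵀ = aeval A p := by
  have key : ∀ q : Polynomial ℝ, (aeval A q)ᵀ = aeval Aᵀ q := by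
    intro q
    induction q using Polynomial.induction_on' with
    | add q r hq hr => simp [map_add, hq, hr, Matrix.transpose_add]
    | monomial m a =>
      rw [aeval_monomial, aeval_monomial, Algebra.algebraMap_eq_smul_one, smul_mul_assoc,
        one_mul, smul_mul_assoc, one_mul, Matrix.transpose_smul, Matrix.transpose_pow]
  rw [key, h]

lemma aux_qf {n : ℕ} (hn : 0 < n) (G : SimpleGraph (Fin n)) [DecidableRel G.Adj] {k : ℕ}
    (hreg : G.IsRegularOfDegree k) (p : Polynomial ℝ) (lp L : ℝ)
    (hL : L = p.eval (k : ℝ))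
    (hlow : ∀ μ : ℝ, (∃ v, v ≠ 0 ∧ (SimpleGraph.adjMatrix ℝ G) *ᵥ v = μ • v) → μ ≠ (k : ℝ) →
      lp ≤ p.eval μ)
    (hgt : lp < L) (x : Fin n → ℝ) :
    lp * (x ⬝ᵥ x) + (L - lp) * (x ⬝ᵥ (fun _ => (1:ℝ)))^2 / n
      ≤ x ⬝ᵥ ((aeval (SimpleGraph.adjMatrix ℝ G) p) *ᵥ x) := by
  classical
  set A := SimpleGraph.adjMatrix ℝ G with hAdef
  have hsym : Aᵀ = A := G.isSymm_adjMatrix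
  have hA : A.IsHermitian := by
    rw [Matrix.IsHermitian, Matrix.conjTranspose_eq_transpose_of_trivial]
    exact hsym
  let e := hA.eigenvectorBasis
  let μ := hA.eigenvalues
  have hinner : ∀ y z : EuclideanSpace ℝ (Fin n),
      ⟪y, z⟫ = dotProduct (⇑y) ⇑z := by
    intro y z
    simp [PiLp.inner_apply, dotProduct, mul_comm]
  let x' : EuclideanSpace ℝ (Fin n) := (WithLp.equiv 2 (Fin n → ℝ)).symm x
  let j' : EuclideanSpace ℝ (Fin n) := (WithLp.equiv 2 (Fin n → ℝ)).symm (fun _ => (1:ℝ))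
  let y' : EuclideanSpace ℝ (Fin n) :=
    (WithLp.equiv 2 (Fin n → ℝ)).symm ((aeval A p) *ᵥ x)
  have hx'c : (⇑x' : Fin n → ℝ) = x := rfl
  have hj'c : (⇑j' : Fin n → ℝ) = fun _ => (1:ℝ) := rfl
  have hy'c : (⇑y' : Fin n → ℝ) = (aeval A p) *ᵥ x := rfl
  let c : Fin n → ℝ := fun i => ⟪e i, x'⟫
  let d : Fin n → ℝ := fun i => ⟪e i, j'⟫
  have heig : ∀ i, A *ᵥ ⇑(e i) = μ i • ⇑(e i) := fun i => hA.mulVec_eigenvectorBasis i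
  have hjeig : A *ᵥ (fun _ => (1:ℝ)) = (k : ℝ) • (fun _ => (1:ℝ)) := by
    funext i
    rw [show (fun _ : Fin n => (1:ℝ)) = Function.const (Fin n) (1:ℝ) from rfl,
      SimpleGraph.adjMatrix_mulVec_const_apply_of_regular hreg]
    simp
  -- d i = 0 for μ i ≠ k
  have hd0 : ∀ i, μ i ≠ (k : ℝ) → d i = 0 := by
    intro i hi
    have h2 := aux_symdot hsym (⇑(e i)) (fun _ => (1:ℝ))
    rw [heig i, hjeig, smul_dotProduct, dotProduct_smul] at h2
    have h3 : d i = dotProduct (⇑(e i)) (fun _ => (1:ℝ)) := by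
      show ⟪e i, j'⟫ = _
      rw [hinner, hj'c]
    have h4 : (μ i - (k : ℝ)) * d i = 0 := by
      rw [h3]
      rw [smul_eq_mul, smul_eq_mul] at h2
      ring_nf
      ring_nf at h2
      linarith
    rcases mul_eq_zero.mp h4 with h | h
    · exact absurd (by linarith [sub_eq_zero.mp h] : μ i = (k:ℝ)) hi
    · exact h
  -- expansions
  have hxx : x ⬝ᵥ x = ∑ i, c i ^ 2 := by
    have h := e.sum_inner_mul_inner x' x'
    rw [hinner x' x', hx'c] at h
    rw [← h]
    refine Finset.sum_congr rfl fun i _ => ?_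
    rw [pow_two, real_inner_comm (e i) x']
  have hxj : x ⬝ᵥ (fun _ => (1:ℝ)) = ∑ i, c i * d i := by
    have h := e.sum_inner_mul_inner x' j'
    rw [hinner x' j', hx'c, hj'c] at h
    rw [← h]
    refine Finset.sum_congr rfl fun i _ => ?_
    rw [real_inner_comm (e i) x']
  have hjj : (∑ i, d i ^ 2) = (n : ℝ) := by
    have h := e.sum_inner_mul_inner j' j'
    rw [hinner j' j', hj'c] at h
    have h2 : (∑ i, d i ^ 2) = ∑ i, ⟪j', e i⟫ * ⟪e i, j'⟫ :=
      Finset.sum_congr rfl fun i _ => by rw [pow_two, real_inner_comm (e i) j']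
    rw [h2, h]
    simp [dotProduct]
  have hBsym : (aeval A p)ᵀ = aeval A p := aux_aeval_transpose hsym p
  have hqf : x ⬝ᵥ ((aeval A p) *ᵥ x) = ∑ i, p.eval (μ i) * c i ^ 2 := by
    have key : ∀ i, ⟪e i, y'⟫ = p.eval (μ i) * c i := by
      intro i
      rw [hinner, hy'c, ← aux_symdot hBsym (⇑(e i)) x,
        aux_aeval_mulVec A (⇑(e i)) (μ i) (heig i) p, smul_dotProduct, smul_eq_mul]
      exact congrArg (fun r => p.eval (μ i) * r) (hinner (e i) x').symm
    have h := e.sum_inner_mul_inner x' y'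
    rw [hinner x' y', hx'c, hy'c] at h
    rw [← h]
    refine Finset.sum_congr rfl fun i _ => ?_
    rw [key i, real_inner_comm (e i) x']
    show (c i) * (p.eval (μ i) * c i) = p.eval (μ i) * c i ^ 2
    ring
  -- nonzero eigenvectors
  have hev : ∀ i, (⇑(e i) : Fin n → ℝ) ≠ 0 := by
    intro i h0
    have h1 : ‖e i‖ = 1 := e.orthonormal.1 i
    have h2 : (e i : EuclideanSpace ℝ (Fin n)) = 0 := by
      ext z
      exact congrFun h0 z
    rw [h2, norm_zero] at h1
    norm_num at h1
  have hlow' : ∀ i, μ i ≠ (k : ℝ) → lp ≤ p.eval (μ i) :=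
    fun i hi => hlow (μ i) ⟨⇑(e i), hev i, heig i⟩ hi
  -- Cauchy-Schwarz piece
  have hcs : (x ⬝ᵥ (fun _ => (1:ℝ)))^2
      ≤ (∑ i ∈ Finset.univ.filter (fun i => μ i = (k:ℝ)), c i ^ 2) * n := by
    have h1 : x ⬝ᵥ (fun _ => (1:ℝ))
        = ∑ i ∈ Finset.univ.filter (fun i => μ i = (k:ℝ)), c i * d i := by
      rw [hxj, ← Finset.sum_filter_add_sum_filter_not Finset.univ (fun i => μ i = (k:ℝ))
        (fun i => c i * d i)]
      have h0 : ∑ i ∈ Finset.univ.filter (fun i => ¬ μ i = (k:ℝ)), c i * d i = 0 := by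
        refine Finset.sum_eq_zero fun i hi => ?_
        rw [Finset.mem_filter] at hi
        rw [hd0 i hi.2, mul_zero]
      rw [h0, add_zero]
    rw [h1]
    calc (∑ i ∈ Finset.univ.filter (fun i => μ i = (k:ℝ)), c i * d i)^2
        ≤ (∑ i ∈ Finset.univ.filter (fun i => μ i = (k:ℝ)), c i ^ 2)
          * (∑ i ∈ Finset.univ.filter (fun i => μ i = (k:ℝ)), d i ^ 2) :=
        Finset.sum_mul_sq_le_sq_mul_sq _ c d
      _ ≤ _ := by
        refine mul_le_mul_of_nonneg_left ?_ (Finset.sum_nonneg fun i _ => sq_nonneg _)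
        rw [← hjj]
        exact Finset.sum_le_sum_of_subset_of_nonneg (Finset.filter_subset _ _)
          (fun i _ _ => sq_nonneg _)
  have hmain : (L - lp) * (∑ i ∈ Finset.univ.filter (fun i => μ i = (k:ℝ)), c i ^ 2)
      ≤ x ⬝ᵥ ((aeval A p) *ᵥ x) - lp * (x ⬝ᵥ x) := by
    have hsplit := Finset.sum_filter_add_sum_filter_not Finset.univ (fun i => μ i = (k:ℝ))
      (fun i => (p.eval (μ i) - lp) * c i ^ 2)
    have hrhs : (∑ i, p.eval (μ i) * c i ^ 2) - lp * (∑ i, c i ^ 2)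
        = ∑ i, (p.eval (μ i) - lp) * c i ^ 2 := by
      rw [Finset.mul_sum, ← Finset.sum_sub_distrib]
      exact Finset.sum_congr rfl fun i _ => by ring
    rw [hqf, hxx, hrhs, ← hsplit, Finset.mul_sum]
    have h2 : ∑ i ∈ Finset.univ.filter (fun i => μ i = (k:ℝ)), (L - lp) * c i ^ 2
        = ∑ i ∈ Finset.univ.filter (fun i => μ i = (k:ℝ)), (p.eval (μ i) - lp) * c i ^ 2 := by
      refine Finset.sum_congr rfl fun i hi => ?_
      rw [Finset.mem_filter] at hi
      rw [hi.2, hL]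
    rw [h2]
    have h3 : 0 ≤ ∑ i ∈ Finset.univ.filter (fun i => ¬ μ i = (k:ℝ)),
        (p.eval (μ i) - lp) * c i ^ 2 := by
      refine Finset.sum_nonneg fun i hi => ?_
      rw [Finset.mem_filter] at hi
      exact mul_nonneg (by linarith [hlow' i hi.2]) (sq_nonneg _)
    linarith
  have hn' : (0:ℝ) < n := by exact_mod_cast hn
  have hfinal : (L - lp) * (x ⬝ᵥ (fun _ => (1:ℝ)))^2 / n
      ≤ (L - lp) * (∑ i ∈ Finset.univ.filter (fun i => μ i = (k:ℝ)), c i ^ 2) := by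
    rw [div_le_iff₀ hn']
    calc (L - lp) * (x ⬝ᵥ (fun _ => (1:ℝ)))^2
        ≤ (L - lp) * ((∑ i ∈ Finset.univ.filter (fun i => μ i = (k:ℝ)), c i ^ 2) * n) :=
        mul_le_mul_of_nonneg_left hcs (by linarith)
      _ = _ := by ring
  linarith

lemma aux_eval_charpoly {n : ℕ} (M : Matrix (Fin n) (Fin n) ℝ) (μ : ℝ) :
    M.charpoly.eval μ = (μ • (1 : Matrix (Fin n) (Fin n) ℝ) - M).det := by
  rw [Matrix.charpoly, ← Polynomial.coe_evalRingHom, RingHom.map_det]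
  congr 1
  ext i j
  by_cases hij : i = j <;>
    simp [hij, charmatrix_apply_eq, charmatrix_apply_ne, Matrix.one_apply, Matrix.smul_apply,
      Matrix.sub_apply]

lemma aux_eigenvalue_iff {n : ℕ} (M : Matrix (Fin n) (Fin n) ℝ) (μ : ℝ) :
    (∃ v, v ≠ 0 ∧ M *ᵥ v = μ • v) ↔ M.charpoly.eval μ = 0 := by
  rw [aux_eval_charpoly, ← Matrix.exists_mulVec_eq_zero_iff]
  constructor
  · rintro ⟨v, hv, h⟩
    exact ⟨v, hv, by rw [sub_mulVec, smul_mulVec, one_mulVec, h, sub_self]⟩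
  · rintro ⟨v, hv, h⟩
    refine ⟨v, hv, ?_⟩
    rw [sub_mulVec, smul_mulVec, one_mulVec, sub_eq_zero] at h
    exact h.symm

lemma aux_perron {n k : ℕ} (G : SimpleGraph (Fin n)) [DecidableRel G.Adj]
    (hreg : G.IsRegularOfDegree k) (v : Fin n → ℝ) (hv : v ≠ 0) (μ : ℝ)
    (h : (SimpleGraph.adjMatrix ℝ G) *ᵥ v = μ • v) : μ ≤ k := by
  have hne : (Finset.univ : Finset (Fin n)).Nonempty := by
    by_contra hc
    exact hv (funext fun i => absurd (Finset.mem_univ i) (fun m => hc ⟨i, m⟩))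
  obtain ⟨i, -, hi⟩ := Finset.exists_max_image Finset.univ (fun i => |v i|) hne
  have hvi : 0 < |v i| := by
    rcases lt_or_eq_of_le (abs_nonneg (v i)) with h' | h'
    · exact h'
    · exfalso; apply hv; funext j
      have := hi j (Finset.mem_univ j)
      rw [← h'] at this
      exact abs_nonpos_iff.mp this
  have key : |μ| * |v i| ≤ (k : ℝ) * |v i| := by
    have h1 : |μ| * |v i| = |(SimpleGraph.adjMatrix ℝ G *ᵥ v) i| := by
      rw [h]; simp [abs_mul]
    rw [h1, SimpleGraph.adjMatrix_mulVec_apply]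
    calc |∑ u ∈ G.neighborFinset i, v u| ≤ ∑ u ∈ G.neighborFinset i, |v u| :=
          Finset.abs_sum_le_sum_abs _ _
      _ ≤ ∑ u ∈ G.neighborFinset i, |v i| :=
          Finset.sum_le_sum fun u _ => hi u (Finset.mem_univ u)
      _ = (k : ℝ) * |v i| := by rw [Finset.sum_const, SimpleGraph.card_neighborFinset_eq_degree, hreg i, nsmul_eq_mul]
  have := le_of_mul_le_mul_right key hvi
  exact le_trans (le_abs_self μ) this


lemma aux_pow_entry_zero {n t : ℕ} (G : SimpleGraph (Fin n)) [DecidableRel G.Adj]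
    (u v : Fin n) (huv : u ≠ v) (hnadj : ¬ (G.Reachable u v ∧ G.dist u v ≤ t))
    (m : ℕ) (hm : m ≤ t) : ((SimpleGraph.adjMatrix ℝ G) ^ m) u v = 0 := by
  rw [SimpleGraph.adjMatrix_pow_apply_eq_card_walk]
  norm_num
  rw [Finset.eq_empty_iff_forall_notMem]
  intro w hw
  rw [SimpleGraph.mem_finsetWalkLength_iff] at hw
  exact hnadj ⟨⟨w⟩, le_trans (le_trans (SimpleGraph.dist_le w) (le_of_eq hw)) hm⟩

lemma aux_aeval_entry_zero {n t : ℕ} (G : SimpleGraph (Fin n)) [DecidableRel G.Adj]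
    (p : Polynomial ℝ) (hdeg : p.natDegree ≤ t)
    (u v : Fin n) (huv : u ≠ v) (hnadj : ¬ (G.Reachable u v ∧ G.dist u v ≤ t)) :
    (aeval (SimpleGraph.adjMatrix ℝ G) p) u v = 0 := by
  rw [Polynomial.aeval_eq_sum_range]
  rw [show ((∑ i ∈ Finset.range (p.natDegree + 1), p.coeff i • SimpleGraph.adjMatrix ℝ G ^ i) u v)
    = ∑ i ∈ Finset.range (p.natDegree + 1), p.coeff i • ((SimpleGraph.adjMatrix ℝ G ^ i) u v) by
      simp [Matrix.sum_apply]]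
  refine Finset.sum_eq_zero fun m hmem => ?_
  rw [aux_pow_entry_zero G u v huv hnadj m (by
    have := Finset.mem_range.mp hmem; omega), smul_zero]

end AuxRatioBound

/-- Ratio-type bound for regular graphs.
If `G` is a `k`-regular graph on `n ≥ 2` vertices whose adjacency eigenvalues, with
multiplicity and in nonincreasing order, are `lam 0 ≥ lam 1 ≥ ⋯`, `p` is a real polynomial of
degree at most `t`, `W = max_u (p(A))_{uu}`, `lp = min_{i ≥ 2} p(λ_i)` and `p(λ_1) > lp`, then
`χ_t(G) ≥ n / ⌊n (W − lp) / (p(λ_1) − lp)⌋`. -/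
theorem stmt0 {n : ℕ} (hn : 2 ≤ n) (G : SimpleGraph (Fin n)) [DecidableRel G.Adj]
    (k : ℕ) (hreg : G.IsRegularOfDegree k)
    (lam : Fin n → ℝ) (hmono : Antitone lam)
    (hchar : (SimpleGraph.adjMatrix ℝ G).charpoly = ∏ i, (X - C (lam i)))
    (t : ℕ) (ht : 1 ≤ t) (p : Polynomial ℝ) (hdeg : p.natDegree ≤ t)
    (W lp : ℝ)
    (hW : IsGreatest (Set.range fun u : Fin n =>
      (Polynomial.aeval (SimpleGraph.adjMatrix ℝ G) p) u u) W)
    (hlp : IsLeast (Set.range fun i : {i : Fin n // 0 < i.1} => p.eval (lam i.1)) lp)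
    (hgt : lp < p.eval (lam ⟨0, by omega⟩)) :
    (n : ℝ) / (⌊(n : ℝ) * (W - lp) / (p.eval (lam ⟨0, by omega⟩) - lp)⌋ : ℤ)
      ≤ ((distChromaticNumber G t).toNat : ℝ) := by
  classical
  have hn0 : 0 < n := by omega
  set A := SimpleGraph.adjMatrix ℝ G with hAdef
  set lam0 : Fin n := ⟨0, by omega⟩ with hlam0
  set L : ℝ := p.eval (lam lam0) with hLdef
  -- eigenvalue iff root of the given charpoly
  have hroot : ∀ μ : ℝ, (∃ v, v ≠ 0 ∧ A *ᵥ v = μ • v) ↔ ∃ i, lam i = μ := by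
    intro μ
    rw [aux_eigenvalue_iff, hchar]
    rw [Polynomial.eval_prod]
    rw [Finset.prod_eq_zero_iff]
    constructor
    · rintro ⟨i, -, hi⟩
      refine ⟨i, ?_⟩
      simp only [eval_sub, eval_X, eval_C] at hi
      linarith [sub_eq_zero.mp hi]
    · rintro ⟨i, hi⟩
      exact ⟨i, Finset.mem_univ i, by simp [hi]⟩
  -- j eigenvector with eigenvalue k
  have hjeig : A *ᵥ (fun _ => (1:ℝ)) = (k : ℝ) • (fun _ => (1:ℝ)) := by
    funext i
    rw [show (fun _ : Fin n => (1:ℝ)) = Function.const (Fin n) (1:ℝ) from rfl,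
      SimpleGraph.adjMatrix_mulVec_const_apply_of_regular hreg]
    simp
  have hjne : (fun _ : Fin n => (1:ℝ)) ≠ 0 := by
    intro h0
    have := congrFun h0 lam0
    norm_num at this
  -- lam lam0 = k
  have hlamk : lam lam0 = (k : ℝ) := by
    refine le_antisymm ?_ ?_
    · obtain ⟨v, hv, hveq⟩ := (hroot (lam lam0)).mpr ⟨lam0, rfl⟩
      exact aux_perron G hreg v hv _ hveq
    · obtain ⟨i, hi⟩ := (hroot (k : ℝ)).mp ⟨_, hjne, hjeig⟩
      calc (k : ℝ) = lam i := hi.symm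
        _ ≤ lam lam0 := hmono (by simp [hlam0, Fin.le_def])
  -- lower bound for other eigenvalues
  have hlow : ∀ μ : ℝ, (∃ v, v ≠ 0 ∧ A *ᵥ v = μ • v) → μ ≠ (k : ℝ) → lp ≤ p.eval μ := by
    intro μ hv hμk
    obtain ⟨i, hi⟩ := (hroot μ).mp hv
    have hipos : 0 < i.1 := by
      rcases Nat.eq_zero_or_pos i.1 with h0 | h0
      · exfalso
        apply hμk
        rw [← hi, ← hlamk]
        congr 1
        rw [hlam0]
        exact Fin.ext h0
      · exact h0
    have h2 := hlp.2 ⟨⟨i, hipos⟩, rfl⟩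
    simp only at h2
    rwa [hi] at h2
  -- coloring
  set H := powerGraph G t with hH
  set m := (distChromaticNumber G t).toNat with hm
  have hcol : H.Colorable m := H.colorable_chromaticNumber_of_fintype
  obtain C := hcol.some
  have hm0 : 0 < m := (C ⟨0, by omega⟩).pos
  -- pigeonhole: a big color class
  have hcard : (Finset.univ : Finset (Fin n)).card
      = ∑ col : Fin m, (Finset.univ.filter (fun v => C v = col)).card :=
    Finset.card_eq_sum_card_fiberwise (fun v _ => Finset.mem_univ (C v))
  obtain ⟨c0, -, hc0⟩ := Finset.exists_max_image Finset.univ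
    (fun col : Fin m => (Finset.univ.filter (fun v => C v = col)).card)
    ⟨C ⟨0, by omega⟩, Finset.mem_univ _⟩
  set S : Finset (Fin n) := Finset.univ.filter (fun v => C v = c0) with hS
  set s := S.card with hs
  have hnms : n ≤ m * s := by
    calc n = (Finset.univ : Finset (Fin n)).card := by simp
      _ = ∑ col : Fin m, (Finset.univ.filter (fun v => C v = col)).card := hcard
      _ ≤ ∑ _col : Fin m, s := Finset.sum_le_sum (fun col _ => hc0 col (Finset.mem_univ col))
      _ = m * s := by simp [Finset.sum_const, Fintype.card_fin, mul_comm]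
  have hs1 : 1 ≤ s := by
    rcases Nat.eq_zero_or_pos s with h0 | h0
    · rw [h0, mul_zero] at hnms; omega
    · exact h0
  -- independence of S in H
  have hindep : ∀ u ∈ S, ∀ v ∈ S, u ≠ v → ¬ (G.Reachable u v ∧ G.dist u v ≤ t) := by
    intro u hu v hv hne hX
    have hadj : H.Adj u v := (show u ≠ v ∧ G.Reachable u v ∧ G.dist u v ≤ t from ⟨hne, hX.1, hX.2⟩)
    have := C.valid hadj
    rw [hS, Finset.mem_filter] at hu hv
    rw [hu.2, hv.2] at this
    exact this rfl
  -- the indicator vector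
  set x : Fin n → ℝ := fun u => if u ∈ S then (1:ℝ) else 0 with hx
  have hxx : x ⬝ᵥ x = (s : ℝ) := by
    rw [hx]
    simp only [dotProduct, ite_mul, one_mul, zero_mul]
    rw [Finset.sum_ite_mem, Finset.univ_inter]
    simp [hs]
  have hxj : x ⬝ᵥ (fun _ => (1:ℝ)) = (s : ℝ) := by
    rw [hx]
    simp only [dotProduct, ite_mul, one_mul, zero_mul, mul_one]
    rw [Finset.sum_ite_mem, Finset.univ_inter]
    simp [hs]
  set B := aeval A p with hB
  have hxBx : x ⬝ᵥ (B *ᵥ x) ≤ (s : ℝ) * W := by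
    have step1 : x ⬝ᵥ (B *ᵥ x) = ∑ u ∈ S, ∑ v ∈ S, B u v := by
      rw [hx, dotProduct]
      simp only [ite_mul, one_mul, zero_mul]
      rw [Finset.sum_ite_mem, Finset.univ_inter]
      refine Finset.sum_congr rfl fun u _ => ?_
      rw [Matrix.mulVec, dotProduct]
      simp only [mul_ite, mul_one, mul_zero]
      rw [Finset.sum_ite_mem, Finset.univ_inter]
    have step2 : ∀ u ∈ S, ∑ v ∈ S, B u v = B u u := by
      intro u hu
      refine Finset.sum_eq_single_of_mem u hu fun v hv hvu => ?_
      exact aux_aeval_entry_zero G p hdeg u v (Ne.symm hvu)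
        (fun hX => hindep u hu v hv (Ne.symm hvu) hX)
    rw [step1, Finset.sum_congr rfl step2]
    calc ∑ u ∈ S, B u u ≤ ∑ _u ∈ S, W :=
        Finset.sum_le_sum fun u _ => hW.2 ⟨u, rfl⟩
      _ = (s : ℝ) * W := by rw [Finset.sum_const, nsmul_eq_mul]
  -- apply the quadratic form bound
  have hqf := aux_qf hn0 G hreg p lp L (by rw [hLdef, hlamk]) hlow hgt x
  rw [hxx, hxj] at hqf
  have hkey : lp * (s:ℝ) + (L - lp) * (s:ℝ)^2 / n ≤ (s:ℝ) * W := le_trans hqf hxBx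
  -- derive s ≤ n (W - lp)/(L - lp)
  have hn' : (0:ℝ) < n := by exact_mod_cast hn0
  have hs' : (0:ℝ) < s := by exact_mod_cast hs1
  have hLlp : (0:ℝ) < L - lp := by linarith [hgt]
  have hratio : (s : ℝ) ≤ (n : ℝ) * (W - lp) / (L - lp) := by
    rw [le_div_iff₀ hLlp]
    have h1 : (L - lp) * (s:ℝ)^2 / n ≤ (s:ℝ) * (W - lp) := by linarith
    rw [div_le_iff₀ hn'] at h1
    have h2 : (s:ℝ) * ((s:ℝ) * (L - lp)) ≤ (s:ℝ) * ((n:ℝ) * (W - lp)) := by nlinarith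
    exact le_of_mul_le_mul_left h2 hs'
  set F : ℤ := ⌊(n : ℝ) * (W - lp) / (L - lp)⌋ with hF
  have hsF : (s : ℤ) ≤ F := Int.le_floor.mpr (by exact_mod_cast hratio)
  have hF0 : 0 < F := lt_of_lt_of_le (by exact_mod_cast hs1) hsF
  have hF' : (0:ℝ) < (F : ℝ) := by exact_mod_cast hF0
  rw [div_le_iff₀ hF']
  calc (n : ℝ) ≤ (m : ℝ) * (s : ℝ) := by exact_mod_cast hnms
    _ ≤ (m : ℝ) * (F : ℝ) := by
      refine mul_le_mul_of_nonneg_left ?_ (by positivity)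
      exact_mod_cast hsF
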